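/- Let B_μ (μ = 0,1,2,3) be 4×4 real orthogonal matrices satisfying B_μ B_ν + B_ν B_μ = −2 η_{μν} I for all μ,ν. Let m ≥ 0 and p ∈ ℝ³ with p ≠ 0, and set E = √(|p|² + m²), a = √((E+m)/(2E)), b = √((E−m)/(2E)), P = Σ_{k=1}^{3} p_k B_k, and G = |p|⁻¹ P B₀. Then the 8×8 block-matrix identity [[m·B₀, P],[−P, m·B₀]] · [[a·I, −b·G],[b·G, a·I]] = [[a·I, −b·G],[b·G, a·I]] · [[E·B₀, 0],[0, E·B₀]] holds; that is, the multiplier matrix of the Majorana-Fourier transform intertwines the momentum-space Dirac operator with multiplication by iγ⁰E_p. -/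

import Mathlib

/-!
With `s = |p|`, the matrices `P` and `B₀` anticommute and `P² = s²`, so `PG = s B₀` and
`B₀ G = -G B₀ = s⁻¹ P`. Multiplying out the blocks, the identity reduces to the half-angle
formulas `b s = a (E - m)` and `a s = b (E + m)`: writing `m = E cos θ`, `s = E sin θ`, one has
`a = cos (θ/2)` and `b = sin (θ/2)`.
-/

open Matrix

noncomputable def minkowskiEta : Matrix (Fin 4) (Fin 4) ℝ :=
  Matrix.diagonal ![1, -1, -1, -1]

theorem sqrt_sub_div_mul_sqrt_eq {σ m E : ℝ} (hσ : 0 < σ) (hE : E = √(σ + m ^ 2)) :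
    √((E - m) / (2 * E)) * √σ = √((E + m) / (2 * E)) * (E - m) := by
  have hE₀ : 0 < E := hE ▸ Real.sqrt_pos.2 (by positivity)
  have hE₂ : E ^ 2 = σ + m ^ 2 := hE ▸ Real.sq_sqrt (by positivity)
  obtain ⟨hmE', hmE⟩ := abs_le.1 (hE ▸ Real.abs_le_sqrt (by linarith) : |m| ≤ E)
  have hEm : 0 ≤ E - m := by linarith
  have hEm' : 0 ≤ E + m := by linarith
  rw [← sq_eq_sq₀ (by positivity) (by positivity), mul_pow, mul_pow,
    Real.sq_sqrt (by positivity), Real.sq_sqrt hσ.le, Real.sq_sqrt (by positivity)]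
  field_simp
  linear_combination (m - E) * hE₂

theorem sqrt_add_div_mul_sqrt_eq {σ m E : ℝ} (hσ : 0 < σ) (hE : E = √(σ + m ^ 2)) :
    √((E + m) / (2 * E)) * √σ = √((E - m) / (2 * E)) * (E + m) := by
  simpa [← sub_eq_add_neg] using sqrt_sub_div_mul_sqrt_eq (m := -m) hσ (by rwa [neg_sq])

section Clifford

variable {K A ι : Type*} [Field K] [Ring A] [Algebra K A] [Fintype ι]

theorem sum_smul_mul_self_of_anticomm [NeZero (2 : K)] (B : ι → A) (g : Matrix ι ι K)
    (hB : ∀ i j, B i * B j + B j * B i = (2 * g i j) • 1) (p : ι → K) :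
    (∑ i, p i • B i) * (∑ i, p i • B i) = (p ⬝ᵥ g *ᵥ p) • 1 := by
  set S := (∑ i, p i • B i) * (∑ i, p i • B i)
  have hS : S = ∑ i, ∑ j, (p i * p j) • (B i * B j) := by
    simp only [S, Finset.sum_mul_sum, smul_mul_smul_comm]
  have hS' : S = ∑ i, ∑ j, (p i * p j) • (B j * B i) := by
    rw [hS, Finset.sum_comm]
    exact Finset.sum_congr rfl fun i _ => Finset.sum_congr rfl fun j _ => by rw [mul_comm]
  apply smul_right_injective A (two_ne_zero (α := K))
  calc (2 : K) • S = S + S := two_smul K S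
    _ = ∑ i, ∑ j, (p i * p j) • (B i * B j + B j * B i) := by
      nth_rewrite 1 [hS]
      rw [hS']
      simp only [smul_add, Finset.sum_add_distrib]
    _ = (2 : K) • (p ⬝ᵥ g *ᵥ p) • 1 := by
      simp only [hB, smul_smul, dotProduct, mulVec, Finset.mul_sum, Finset.sum_smul,
        Finset.smul_sum]
      exact Finset.sum_congr rfl fun i _ => Finset.sum_congr rfl fun j _ => by ring_nf

theorem sum_smul_mul_eq_neg_mul_of_anticomm (B : ι → A) (C : A)
    (hBC : ∀ i, B i * C = -(C * B i)) (p : ι → K) :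
    (∑ i, p i • B i) * C = -(C * ∑ i, p i • B i) := by
  simp only [Finset.sum_mul, Finset.mul_sum, smul_mul_assoc, mul_smul_comm, hBC, smul_neg,
    Finset.sum_neg_distrib]

end Clifford

theorem minkowskiEta_succ_succ (i j : Fin 3) :
    minkowskiEta i.succ j.succ = -(1 : Matrix (Fin 3) (Fin 3) ℝ) i j := by
  fin_cases i <;> fin_cases j <;> simp [minkowskiEta, one_apply]

section Majorana

variable {B : Fin 4 → Matrix (Fin 4) (Fin 4) ℝ}
  (hB : ∀ μ ν, B μ * B ν + B ν * B μ = (-2 * minkowskiEta μ ν) • (1 : Matrix (Fin 4) (Fin 4) ℝ))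
include hB

theorem majorana_zero_mul_self : B 0 * B 0 = -1 := by
  apply smul_right_injective _ (two_ne_zero (α := ℝ))
  simpa [two_smul, minkowskiEta] using hB 0 0

theorem majorana_succ_mul_zero (k : Fin 3) : B k.succ * B 0 = -(B 0 * B k.succ) :=
  eq_neg_of_add_eq_zero_left <| by simpa [minkowskiEta] using hB k.succ 0

theorem majorana_succ_anticomm (i j : Fin 3) :
    B i.succ * B j.succ + B j.succ * B i.succ = (2 * (1 : Matrix (Fin 3) (Fin 3) ℝ) i j) • 1 := by
  rw [hB, minkowskiEta_succ_succ]
  ring_nf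

end Majorana

theorem fromBlocks_dirac_intertwine {n K : Type*} [Fintype n] [DecidableEq n] [Field K]
    {B₀ P G : Matrix n n K} {m s a b E : K} (hB₀ : B₀ * B₀ = -1) (hPB₀ : P * B₀ = -(B₀ * P))
    (hPP : P * P = s ^ 2 • 1) (hs : s ≠ 0) (hG : G = s⁻¹ • (P * B₀))
    (hb : b * s = a * (E - m)) (ha : a * s = b * (E + m)) :
    fromBlocks (m • B₀) P (-P) (m • B₀) * fromBlocks (a • 1) (-(b • G)) (b • G) (a • 1) =
      fromBlocks (a • 1) (-(b • G)) (b • G) (a • 1) * fromBlocks (E • B₀) 0 0 (E • B₀) := by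
  have hPG : P * G = s • B₀ := by
    rw [hG, Matrix.mul_smul, ← mul_assoc, hPP, Matrix.smul_mul, one_mul, smul_smul, sq,
      inv_mul_cancel_left₀ hs]
  have hB₀G : B₀ * G = s⁻¹ • P := by
    rw [hG, Matrix.mul_smul, ← mul_assoc, ← neg_neg (B₀ * P), ← hPB₀, neg_mul, mul_assoc, hB₀,
      mul_neg, mul_one, neg_neg]
  have hGB₀ : G * B₀ = -(s⁻¹ • P) := by
    rw [hG, Matrix.smul_mul, mul_assoc, hB₀, mul_neg, mul_one, smul_neg]
  have ha' : a = b * (E + m) * s⁻¹ := by rw [← ha, mul_inv_cancel_right₀ hs]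
  rw [fromBlocks_multiply, fromBlocks_multiply, fromBlocks_inj]
  simp only [Matrix.smul_mul, Matrix.mul_smul, mul_one, one_mul, mul_zero, neg_mul, mul_neg,
    zero_add, add_zero, neg_neg, smul_neg, hPG, hB₀G, hGB₀, smul_smul]
  refine ⟨?_, ?_, ?_, ?_⟩
  · linear_combination (norm := module) hb • B₀
  · linear_combination (norm := module) ha' • P
  · linear_combination (norm := module) -(ha' • P)
  · linear_combination (norm := module) hb • B₀

theorem majorana_fourier_multiplier_intertwines_general
    (B : Fin 4 → Matrix (Fin 4) (Fin 4) ℝ)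
    (hB : ∀ μ ν, B μ * B ν + B ν * B μ =
      (-2 * minkowskiEta μ ν) • (1 : Matrix (Fin 4) (Fin 4) ℝ))
    (m : ℝ) (p : Fin 3 → ℝ) (hp : p ≠ 0)
    (E a b : ℝ) (P G : Matrix (Fin 4) (Fin 4) ℝ)
    (hE : E = Real.sqrt ((∑ k, p k ^ 2) + m ^ 2))
    (ha : a = Real.sqrt ((E + m) / (2 * E)))
    (hb : b = Real.sqrt ((E - m) / (2 * E)))
    (hP : P = ∑ k, p k • B k.succ)
    (hG : G = (Real.sqrt (∑ k, p k ^ 2))⁻¹ • (P * B 0)) :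
    Matrix.fromBlocks (m • B 0) P (-P) (m • B 0) *
      Matrix.fromBlocks (a • (1 : Matrix (Fin 4) (Fin 4) ℝ)) (-(b • G)) (b • G)
        (a • (1 : Matrix (Fin 4) (Fin 4) ℝ)) =
    Matrix.fromBlocks (a • (1 : Matrix (Fin 4) (Fin 4) ℝ)) (-(b • G)) (b • G)
        (a • (1 : Matrix (Fin 4) (Fin 4) ℝ)) *
      Matrix.fromBlocks (E • B 0) 0 0 (E • B 0) := by
  have hpp : ∑ k, p k ^ 2 = p ⬝ᵥ p := by simp only [dotProduct, sq]
  have hσ : 0 < ∑ k, p k ^ 2 :=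
    (by positivity : (0 : ℝ) ≤ _).lt_of_ne' (hpp ▸ dotProduct_self_eq_zero.not.2 hp)
  have hPP : P * P = √(∑ k, p k ^ 2) ^ 2 • 1 := by
    rw [Real.sq_sqrt hσ.le, hP, sum_smul_mul_self_of_anticomm _ 1 (majorana_succ_anticomm hB),
      one_mulVec, hpp]
  have hPB₀ : P * B 0 = -(B 0 * P) :=
    hP ▸ sum_smul_mul_eq_neg_mul_of_anticomm _ _ (majorana_succ_mul_zero hB) p
  exact fromBlocks_dirac_intertwine (majorana_zero_mul_self hB) hPB₀ hPP (by positivity) hG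
    (ha ▸ hb ▸ sqrt_sub_div_mul_sqrt_eq hσ hE) (ha ▸ hb ▸ sqrt_add_div_mul_sqrt_eq hσ hE)

/-- Given real orthogonal Majorana matrices `B_μ`, a mass `m ≥ 0` and a
nonzero momentum `p ∈ ℝ³`, with `E = √(|p|²+m²)`, `a = √((E+m)/(2E))`,
`b = √((E−m)/(2E))`, `P = Σ_k p_k B_k` and `G = |p|⁻¹ P B₀`, the multiplier matrix of the
Majorana-Fourier transform intertwines the momentum-space Dirac operator with
multiplication by `iγ⁰E_p`:
`[[m·B₀, P],[−P, m·B₀]] · [[a·I, −b·G],[b·G, a·I]] = [[a·I, −b·G],[b·G, a·I]] · [[E·B₀, 0],[0, E·B₀]]`. -/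
theorem majorana_fourier_multiplier_intertwines
    (B : Fin 4 → Matrix (Fin 4) (Fin 4) ℝ)
    (horth : ∀ μ, (B μ)ᵀ * B μ = 1)
    (hB : ∀ μ ν, B μ * B ν + B ν * B μ =
      (-2 * minkowskiEta μ ν) • (1 : Matrix (Fin 4) (Fin 4) ℝ))
    (m : ℝ) (hm : 0 ≤ m) (p : Fin 3 → ℝ) (hp : p ≠ 0)
    (E a b : ℝ) (P G : Matrix (Fin 4) (Fin 4) ℝ)
    (hE : E = Real.sqrt ((∑ k, p k ^ 2) + m ^ 2))
    (ha : a = Real.sqrt ((E + m) / (2 * E)))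
    (hb : b = Real.sqrt ((E - m) / (2 * E)))
    (hP : P = ∑ k, p k • B k.succ)
    (hG : G = (Real.sqrt (∑ k, p k ^ 2))⁻¹ • (P * B 0)) :
    Matrix.fromBlocks (m • B 0) P (-P) (m • B 0) *
      Matrix.fromBlocks (a • (1 : Matrix (Fin 4) (Fin 4) ℝ)) (-(b • G)) (b • G)
        (a • (1 : Matrix (Fin 4) (Fin 4) ℝ)) =
    Matrix.fromBlocks (a • (1 : Matrix (Fin 4) (Fin 4) ℝ)) (-(b • G)) (b • G)
        (a • (1 : Matrix (Fin 4) (Fin 4) ℝ)) *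
      Matrix.fromBlocks (E • B 0) 0 0 (E • B 0) :=
  majorana_fourier_multiplier_intertwines_general B hB m p hp E a b P G hE ha hb hP hG
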